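/- arXiv:2104.01763 — 4 statements merged into one kernel-verified Lean document; each statement's English description precedes it below -/
import Mathlib

section
/- Let F be a nonempty closed convex set of density matrices on ℂ^n and let ρ be a density matrix on ℂ^n. Then ρ ∉ F if and only if there exist a parameter estimation task, i.e. a differentiable family (Φ_θ)_{θ∈J} of CPTP maps on n×n complex matrices indexed by an interval J ⊆ ℝ together with a POVM M = (M_i)_{i∈ι}, a parameter value θ0 ∈ J, and a constant c ∈ ℝ such that the classical Fisher information satisfies F_C(σ | Φ, M)(θ0) ≤ c for every σ ∈ F while F_C(ρ | Φ, M)(θ0) > c. -/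
open Matrix
open scoped Kronecker BigOperators ComplexOrder ENNReal EReal

noncomputable section

/-- A density matrix on `ℂ^n`: positive semidefinite with unit trace. -/
def IsDensityMatrix {n : ℕ} (ρ : Matrix (Fin n) (Fin n) ℂ) : Prop :=
  ρ.PosSemidef ∧ ρ.trace = 1

/-- The Choi matrix `∑ i j, E_ij ⊗ Λ(E_ij)` of a linear map on matrices. -/
def choiMatrix {n m : ℕ}
    (Λ : Matrix (Fin n) (Fin n) ℂ →ₗ[ℂ] Matrix (Fin m) (Fin m) ℂ) :
    Matrix (Fin n × Fin m) (Fin n × Fin m) ℂ :=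
  ∑ i : Fin n, ∑ j : Fin n,
    (Matrix.single i j (1 : ℂ)) ⊗ₖ (Λ (Matrix.single i j (1 : ℂ)))

/-- A CPTP map: trace preserving and completely positive (PSD Choi matrix). -/
def IsCPTP {n m : ℕ}
    (Λ : Matrix (Fin n) (Fin n) ℂ →ₗ[ℂ] Matrix (Fin m) (Fin m) ℂ) : Prop :=
  (∀ A, (Λ A).trace = A.trace) ∧ (choiMatrix Λ).PosSemidef

/-- A POVM: a finite family of PSD matrices summing to the identity. -/
def IsPOVM {m : ℕ} {ι : Type} [Fintype ι] (M : ι → Matrix (Fin m) (Fin m) ℂ) : Prop :=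
  (∀ i, (M i).PosSemidef) ∧ (∑ i, M i) = 1

/-- Outcome probability `P_i^τ(θ) = Re Tr(Φ_θ(τ) M_i)`. -/
def outcomeProb {n m : ℕ} {ι : Type}
    (Φ : ℝ → (Matrix (Fin n) (Fin n) ℂ →ₗ[ℂ] Matrix (Fin m) (Fin m) ℂ))
    (M : ι → Matrix (Fin m) (Fin m) ℂ)
    (τ : Matrix (Fin n) (Fin n) ℂ) (i : ι) (θ : ℝ) : ℝ :=
  ((Φ θ τ * M i).trace).re

/-- Classical Fisher information at `θ0` of the outcome statistics, with one-sided
derivatives taken within the parameter interval `J`. -/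
def classicalFisher {n m : ℕ} {ι : Type} [Fintype ι] (J : Set ℝ)
    (Φ : ℝ → (Matrix (Fin n) (Fin n) ℂ →ₗ[ℂ] Matrix (Fin m) (Fin m) ℂ))
    (M : ι → Matrix (Fin m) (Fin m) ℂ)
    (τ : Matrix (Fin n) (Fin n) ℂ) (θ0 : ℝ) : ℝ :=
  ∑ i : ι,
    if 0 < outcomeProb Φ M τ i θ0 then
      (derivWithin (outcomeProb Φ M τ i) J θ0) ^ 2 / outcomeProb Φ M τ i θ0
    else 0

/-- A parameter estimation task: a differentiable family of CPTP maps indexed by an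
interval `J ⊆ ℝ` together with a POVM. -/
def IsEstimationTask {n m : ℕ} {ι : Type} [Fintype ι] (J : Set ℝ)
    (Φ : ℝ → (Matrix (Fin n) (Fin n) ℂ →ₗ[ℂ] Matrix (Fin m) (Fin m) ℂ))
    (M : ι → Matrix (Fin m) (Fin m) ℂ) : Prop :=
  J.OrdConnected ∧ (∀ θ ∈ J, IsCPTP (Φ θ)) ∧ IsPOVM M ∧
    ∀ τ, IsDensityMatrix τ → ∀ i, DifferentiableOn ℝ (outcomeProb Φ M τ i) J

/-! Separate `ρ` from `F` by a Hahn–Banach functional, written as `σ ↦ Re Tr(A σ)` with `A`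
Hermitian, and rescale it into an effect `5/8 ≤ B ≤ 7/8`. The measurement channel of the
effects `B + θ, 1 - B - θ`, read off in the computational basis, gives outcome probabilities `p + θ` and `1 - p - θ` with `p = Re Tr(B τ)`:
the derivatives are `±1` whatever the state `τ`, so the Fisher information at `θ = 0` is
`1 / (p (1 - p))`. This is strictly increasing for `p ∈ [1/2, 1)`, so the separating threshold
for `p` becomes a threshold for the Fisher information. The converse is immediate. -/

open scoped MatrixOrder

namespace Matrix

variable {m : Type*} [Fintype m]

theorem PosSemidef.trace_mul_nonneg {𝕜 : Type*} [RCLike 𝕜] {A B : Matrix m m 𝕜}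
    (hA : A.PosSemidef) (hB : B.PosSemidef) : 0 ≤ (A * B).trace := by
  classical
  obtain ⟨C, rfl⟩ := CStarAlgebra.nonneg_iff_eq_star_mul_self.mp hA.nonneg
  rw [star_eq_conjTranspose, Matrix.mul_assoc, trace_mul_comm]
  simpa [Matrix.mul_assoc] using (hB.mul_mul_conjTranspose_same C).trace_nonneg

theorem IsHermitian.exists_smul_one_bound [DecidableEq m] {A : Matrix m m ℂ}
    (hA : A.IsHermitian) : ∃ c : ℝ, 0 < c ∧ -(c • 1) ≤ A ∧ A ≤ c • 1 := by
  open scoped Matrix.Norms.L2Operator in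
  have hle : ‖A‖ • (1 : Matrix m m ℂ) ≤ (‖A‖ + 1) • 1 :=
    smul_le_smul_of_nonneg_right (by linarith) zero_le_one
  refine ⟨‖A‖ + 1, by positivity, ?_, ?_⟩
  · calc -((‖A‖ + 1) • 1) ≤ -(‖A‖ • 1) := neg_le_neg hle
      _ ≤ A := by simpa [Algebra.algebraMap_eq_smul_one] using
          hA.isSelfAdjoint.neg_algebraMap_norm_le_self
  · calc A ≤ ‖A‖ • 1 := by simpa [Algebra.algebraMap_eq_smul_one] using
          hA.isSelfAdjoint.le_algebraMap_norm_self
      _ ≤ (‖A‖ + 1) • 1 := hle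

theorem exists_re_trace_mul_eq (f : Module.Dual ℝ (Matrix m m ℂ)) :
    ∃ A : Matrix m m ℂ, ∀ X, f X = (A * X).trace.re := by
  classical
  set g : Module.Dual ℂ (Matrix m m ℂ) := f.extendRCLike
  have hg (X : Matrix m m ℂ) : g X = ((of fun i j => g (single i j 1))ᵀ * X).trace := by
    conv_lhs => rw [matrix_eq_sum_single X]
    simp only [map_sum, trace, diag, mul_apply, transpose_apply, of_apply]
    rw [Finset.sum_comm]
    refine Finset.sum_congr rfl fun i _ => Finset.sum_congr rfl fun j _ => ?_
    rw [show single j i (X j i) = X j i • single j i (1 : ℂ) by simp,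
      map_smul, smul_eq_mul, mul_comm]
  exact ⟨_, fun X => by rw [← hg, ← Module.Dual.re_extendRCLike_apply (𝕜 := ℂ) f X]; rfl⟩

theorem exists_isHermitian_re_trace_mul_eq (f : Module.Dual ℝ (Matrix m m ℂ)) :
    ∃ A : Matrix m m ℂ, A.IsHermitian ∧ ∀ X, X.IsHermitian → f X = (A * X).trace.re := by
  obtain ⟨A, hA⟩ := exists_re_trace_mul_eq f
  refine ⟨(2⁻¹ : ℝ) • (A + Aᴴ), ?_, fun X hX => ?_⟩
  · exact (isHermitian_add_transpose_self A).smul (IsSelfAdjoint.all _)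
  · have hstar : (Aᴴ * X).trace = star (A * X).trace := by
      conv_lhs => rw [← hX.eq]
      rw [← conjTranspose_mul, trace_conjTranspose, trace_mul_comm]
    rw [smul_mul, add_mul, trace_smul, trace_add, hstar, hA X]
    rw [Complex.smul_re, Complex.add_re, Complex.star_def, Complex.conj_re, smul_eq_mul]
    ring

theorem exists_isHermitian_separating {F : Set (Matrix m m ℂ)} {ρ : Matrix m m ℂ}
    (hFcl : IsClosed F) (hFconv : Convex ℝ F) (hF : ∀ σ ∈ F, σ.IsHermitian)
    (hρ : ρ.IsHermitian) (hρF : ρ ∉ F) :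
    ∃ A : Matrix m m ℂ, A.IsHermitian ∧
      ∃ u : ℝ, (∀ σ ∈ F, (A * σ).trace.re < u) ∧ u < (A * ρ).trace.re := by
  have : LocallyConvexSpace ℝ (Matrix m m ℂ) :=
    inferInstanceAs (LocallyConvexSpace ℝ (m → m → ℂ))
  obtain ⟨f, u, hfF, hfρ⟩ := geometric_hahn_banach_closed_point hFconv hFcl hρF
  obtain ⟨A, hA, hAf⟩ := exists_isHermitian_re_trace_mul_eq f.toLinearMap
  exact ⟨A, hA, u, fun σ hσ => hAf σ (hF σ hσ) ▸ hfF σ hσ, hAf ρ hρ ▸ hfρ⟩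

end Matrix

open Matrix

theorem IsDensityMatrix.le_re_trace_mul {n : ℕ} {τ X : Matrix (Fin n) (Fin n) ℂ}
    (hτ : IsDensityMatrix τ) {a : ℝ} (h : a • 1 ≤ X) : a ≤ (X * τ).trace.re := by
  have := (le_iff.mp h).trace_mul_nonneg hτ.1
  rw [sub_mul, trace_sub, smul_mul, one_mul, trace_smul, hτ.2] at this
  simpa using (Complex.le_def.mp this).1

theorem IsDensityMatrix.re_trace_mul_le {n : ℕ} {τ X : Matrix (Fin n) (Fin n) ℂ}
    (hτ : IsDensityMatrix τ) {b : ℝ} (h : X ≤ b • 1) : (X * τ).trace.re ≤ b := by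
  have := (le_iff.mp h).trace_mul_nonneg hτ.1
  rw [sub_mul, trace_sub, smul_mul, one_mul, trace_smul, hτ.2] at this
  simpa using (Complex.le_def.mp this).1

theorem exists_effect_separating {n : ℕ} {F : Set (Matrix (Fin n) (Fin n) ℂ)}
    {ρ : Matrix (Fin n) (Fin n) ℂ} (hFcl : IsClosed F) (hFconv : Convex ℝ F)
    (hF : ∀ σ ∈ F, IsDensityMatrix σ) (hρ : IsDensityMatrix ρ) (hρF : ρ ∉ F) :
    ∃ B : Matrix (Fin n) (Fin n) ℂ, (5 / 8 : ℝ) • 1 ≤ B ∧ B ≤ (7 / 8 : ℝ) • 1 ∧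
      ∃ q : ℝ, 1 / 2 ≤ q ∧ (∀ σ ∈ F, (B * σ).trace.re ≤ q) ∧ q < (B * ρ).trace.re := by
  obtain ⟨A, hA, u, hAF, hAρ⟩ :=
    exists_isHermitian_separating hFcl hFconv (fun σ hσ => (hF σ hσ).1.1) hρ.1.1 hρF
  obtain ⟨c, hc, hAc₁, hAc₂⟩ := hA.exists_smul_one_bound
  set s : ℝ := (8 * c)⁻¹
  have hs : 0 < s := by positivity
  have hsc : s * c = 1 / 8 := by simp only [s]; field_simp
  set B : Matrix (Fin n) (Fin n) ℂ := (3 / 4 : ℝ) • 1 + s • A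
  have hB_re (τ : Matrix (Fin n) (Fin n) ℂ) (hτ : τ.trace = 1) :
      (B * τ).trace.re = 3 / 4 + s * (A * τ).trace.re := by
    simp [B, add_mul, hτ]
  have hB₁ : (5 / 8 : ℝ) • 1 ≤ B :=
    calc (5 / 8 : ℝ) • (1 : Matrix (Fin n) (Fin n) ℂ) = (3 / 4 : ℝ) • 1 + s • -(c • 1) := by
          rw [smul_neg, smul_smul, hsc, ← sub_eq_add_neg, ← sub_smul]; norm_num
      _ ≤ B := add_le_add le_rfl (smul_le_smul_of_nonneg_left hAc₁ hs.le)
  have hB₂ : B ≤ (7 / 8 : ℝ) • 1 :=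
    calc B ≤ (3 / 4 : ℝ) • (1 : Matrix (Fin n) (Fin n) ℂ) + s • (c • 1) :=
          add_le_add le_rfl (smul_le_smul_of_nonneg_left hAc₂ hs.le)
      _ = (7 / 8 : ℝ) • 1 := by rw [smul_smul, hsc, ← add_smul]; norm_num
  refine ⟨B, hB₁, hB₂, max (3 / 4 + s * u) (1 / 2), le_max_right _ _, fun σ hσ => ?_, ?_⟩
  · rw [hB_re σ (hF σ hσ).2]
    exact le_max_of_le_left (by gcongr; exact (hAF σ hσ).le)
  · refine max_lt ?_ (lt_of_lt_of_le (by norm_num) (hρ.le_re_trace_mul hB₁))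
    rw [hB_re ρ hρ.2]
    gcongr

def measurementChannel {n k : ℕ} (E : Fin k → Matrix (Fin n) (Fin n) ℂ) :
    Matrix (Fin n) (Fin n) ℂ →ₗ[ℂ] Matrix (Fin k) (Fin k) ℂ where
  toFun τ := diagonal fun i => (E i * τ).trace
  map_add' τ τ' := by simp [Matrix.mul_add]
  map_smul' c τ := by ext i j; simp [diagonal_apply]

def basisPOVM (k : ℕ) (i : Fin k) : Matrix (Fin k) (Fin k) ℂ :=
  diagonal (Pi.single i 1)

section MeasurementChannel

variable {n k : ℕ}

theorem isPOVM_basisPOVM : IsPOVM (basisPOVM k) := by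
  refine ⟨fun i => posSemidef_diagonal_iff.mpr (Pi.single_nonneg.mpr zero_le_one), ?_⟩
  ext i j
  simp [basisPOVM, Matrix.sum_apply, diagonal_apply, one_apply, Pi.single_apply]

theorem choiMatrix_measurementChannel (E : Fin k → Matrix (Fin n) (Fin n) ℂ) :
    choiMatrix (measurementChannel E) = ∑ i, (E i)ᵀ ⊗ₖ basisPOVM k i := by
  ext ⟨a, b⟩ ⟨c, d⟩
  simp [choiMatrix, measurementChannel, basisPOVM, trace_mul_single, Matrix.sum_apply,
    kroneckerMap_apply, single_apply, diagonal_apply, Pi.single_apply, ite_and]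

theorem isCPTP_measurementChannel {E : Fin k → Matrix (Fin n) (Fin n) ℂ} (hE : IsPOVM E) :
    IsCPTP (measurementChannel E) := by
  refine ⟨fun τ => ?_, ?_⟩
  · simp only [measurementChannel, LinearMap.coe_mk, AddHom.coe_mk, trace_diagonal]
    rw [← trace_sum, ← Finset.sum_mul, hE.2, one_mul]
  · rw [choiMatrix_measurementChannel]
    exact posSemidef_sum _ fun i _ => ((hE.1 i).transpose).kronecker (isPOVM_basisPOVM.1 i)

theorem outcomeProb_measurementChannel (E : ℝ → Fin k → Matrix (Fin n) (Fin n) ℂ)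
    (τ : Matrix (Fin n) (Fin n) ℂ) (i : Fin k) (θ : ℝ) :
    outcomeProb (fun θ => measurementChannel (E θ)) (basisPOVM k) τ i θ =
      (E θ i * τ).trace.re := by
  simp [outcomeProb, measurementChannel, basisPOVM, diagonal_mul_diagonal, Pi.single_apply]

end MeasurementChannel

theorem isPOVM_pair {m : ℕ} {E : Matrix (Fin m) (Fin m) ℂ} (h₀ : 0 ≤ E) (h₁ : E ≤ 1) :
    IsPOVM ![E, 1 - E] :=
  ⟨Fin.forall_fin_two.mpr ⟨h₀.posSemidef, Matrix.le_iff.mp h₁⟩, by simp⟩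

def shiftedEffects {n : ℕ} (B : Matrix (Fin n) (Fin n) ℂ) (θ : ℝ) :
    Fin 2 → Matrix (Fin n) (Fin n) ℂ :=
  ![B + θ • 1, 1 - (B + θ • 1)]

section ShiftedEffects

variable {n : ℕ} {B : Matrix (Fin n) (Fin n) ℂ}

theorem outcomeProb_shiftedEffects_zero {τ : Matrix (Fin n) (Fin n) ℂ} (hτ : τ.trace = 1) :
    outcomeProb (fun θ => measurementChannel (shiftedEffects B θ)) (basisPOVM 2) τ 0 =
      fun θ => (B * τ).trace.re + θ := by
  ext θ
  simp [outcomeProb_measurementChannel, shiftedEffects, add_mul, hτ]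

theorem outcomeProb_shiftedEffects_one {τ : Matrix (Fin n) (Fin n) ℂ} (hτ : τ.trace = 1) :
    outcomeProb (fun θ => measurementChannel (shiftedEffects B θ)) (basisPOVM 2) τ 1 =
      fun θ => 1 - (B * τ).trace.re - θ := by
  ext θ
  simp [outcomeProb_measurementChannel, shiftedEffects, sub_mul, add_mul, hτ, sub_sub]

theorem isEstimationTask_shiftedEffects (hB₀ : 0 ≤ B) (hB₁ : B ≤ (7 / 8 : ℝ) • 1) :
    IsEstimationTask (Set.Icc 0 (1 / 8))
      (fun θ => measurementChannel (shiftedEffects B θ)) (basisPOVM 2) := by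
  refine ⟨Set.ordConnected_Icc, fun θ hθ => isCPTP_measurementChannel (isPOVM_pair ?_ ?_),
    isPOVM_basisPOVM, fun τ hτ => Fin.forall_fin_two.mpr ⟨?_, ?_⟩⟩
  · exact add_nonneg hB₀ (smul_nonneg hθ.1 zero_le_one)
  · calc B + θ • 1 ≤ (7 / 8 : ℝ) • 1 + (1 / 8 : ℝ) • 1 :=
          add_le_add hB₁ (smul_le_smul_of_nonneg_right hθ.2 zero_le_one)
      _ = 1 := by rw [← add_smul]; norm_num
  · rw [outcomeProb_shiftedEffects_zero hτ.2]; fun_prop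
  · rw [outcomeProb_shiftedEffects_one hτ.2]; fun_prop

theorem classicalFisher_shiftedEffects {τ : Matrix (Fin n) (Fin n) ℂ} (hτ : τ.trace = 1)
    (hp₀ : 0 < (B * τ).trace.re) (hp₁ : (B * τ).trace.re < 1) :
    classicalFisher (Set.Icc 0 (1 / 8)) (fun θ => measurementChannel (shiftedEffects B θ))
      (basisPOVM 2) τ 0 = ((B * τ).trace.re * (1 - (B * τ).trace.re))⁻¹ := by
  rw [classicalFisher, Fin.sum_univ_two, outcomeProb_shiftedEffects_zero hτ,
    outcomeProb_shiftedEffects_one hτ]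
  set p := (B * τ).trace.re
  have hJ : UniqueDiffWithinAt ℝ (Set.Icc (0 : ℝ) (1 / 8)) 0 :=
    uniqueDiffOn_Icc (by norm_num) 0 (by norm_num)
  have hd₀ : derivWithin (fun θ => p + θ) (Set.Icc 0 (1 / 8)) 0 = 1 :=
    ((hasDerivAt_id 0).const_add p).hasDerivWithinAt.derivWithin hJ
  have hd₁ : derivWithin (fun θ => 1 - p - θ) (Set.Icc 0 (1 / 8)) 0 = -1 :=
    ((hasDerivAt_id 0).const_sub (1 - p)).hasDerivWithinAt.derivWithin hJ
  simp only [hd₀, hd₁, add_zero, sub_zero, if_pos hp₀, if_pos (sub_pos.mpr hp₁)]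
  field_simp [(sub_pos.mpr hp₁).ne']
  ring

end ShiftedEffects

theorem strictMonoOn_inv_mul_one_sub :
    StrictMonoOn (fun p : ℝ => (p * (1 - p))⁻¹) (Set.Ico (1 / 2) 1) := by
  intro p hp q hq hpq
  have : 0 < q * (1 - q) := mul_pos (by linarith [hq.1]) (by linarith [hq.2])
  exact inv_strictAnti₀ this (by nlinarith [hp.1])

theorem fisher_universally_identifies_states_general {n : ℕ}
    (F : Set (Matrix (Fin n) (Fin n) ℂ)) (hFcl : IsClosed F)
    (hFconv : Convex ℝ F) (hFdm : ∀ σ ∈ F, IsDensityMatrix σ)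
    (ρ : Matrix (Fin n) (Fin n) ℂ) (hρ : IsDensityMatrix ρ) :
    ρ ∉ F ↔
      ∃ (m : ℕ) (ι : Type) (_ : Fintype ι) (J : Set ℝ)
        (Φ : ℝ → (Matrix (Fin n) (Fin n) ℂ →ₗ[ℂ] Matrix (Fin m) (Fin m) ℂ))
        (M : ι → Matrix (Fin m) (Fin m) ℂ) (θ0 : ℝ) (c : ℝ),
        IsEstimationTask J Φ M ∧ θ0 ∈ J ∧
        (∀ σ ∈ F, classicalFisher J Φ M σ θ0 ≤ c) ∧
        c < classicalFisher J Φ M ρ θ0 := by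
  refine ⟨fun hρF => ?_, fun ⟨_, _, _, _, _, _, _, _, _, _, hFc, hcρ⟩ hρF =>
    (hFc ρ hρF).not_gt hcρ⟩
  obtain ⟨B, hB₁, hB₂, q, hq, hFq, hqρ⟩ := exists_effect_separating hFcl hFconv hFdm hρ hρF
  have hB₀ : 0 ≤ B := (smul_nonneg (by norm_num) zero_le_one).trans hB₁
  have hp (τ) (hτ : IsDensityMatrix τ) : (B * τ).trace.re ∈ Set.Ico (1 / 2) 1 :=
    ⟨by linarith [hτ.le_re_trace_mul hB₁], by linarith [hτ.re_trace_mul_le hB₂]⟩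
  have hfisher (τ) (hτ : IsDensityMatrix τ) :
      classicalFisher (Set.Icc 0 (1 / 8)) (fun θ => measurementChannel (shiftedEffects B θ))
        (basisPOVM 2) τ 0 = ((B * τ).trace.re * (1 - (B * τ).trace.re))⁻¹ :=
    classicalFisher_shiftedEffects hτ.2 (by linarith [(hp τ hτ).1]) (hp τ hτ).2
  have hq' : q ∈ Set.Ico (1 / 2) 1 := ⟨hq, hqρ.trans (hp ρ hρ).2⟩
  refine ⟨2, Fin 2, inferInstance, Set.Icc 0 (1 / 8),
    fun θ => measurementChannel (shiftedEffects B θ), basisPOVM 2, 0, (q * (1 - q))⁻¹,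
    isEstimationTask_shiftedEffects hB₀ hB₂, ⟨le_rfl, by norm_num⟩, fun σ hσ => ?_, ?_⟩
  · rw [hfisher σ (hFdm σ hσ)]
    exact strictMonoOn_inv_mul_one_sub.monotoneOn (hp σ (hFdm σ hσ)) hq' (hFq σ hσ)
  · rw [hfisher ρ hρ]
    exact strictMonoOn_inv_mul_one_sub hq' (hp ρ hρ) hqρ

/-- Theorem 1 of the paper: a state `ρ` is resourceful (`ρ ∉ F`) iff there
is a parameter estimation task whose classical Fisher information separates `ρ` from all
free states. -/
theorem fisher_universally_identifies_states {n : ℕ}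
    (F : Set (Matrix (Fin n) (Fin n) ℂ)) (hFne : F.Nonempty) (hFcl : IsClosed F)
    (hFconv : Convex ℝ F) (hFdm : ∀ σ ∈ F, IsDensityMatrix σ)
    (ρ : Matrix (Fin n) (Fin n) ℂ) (hρ : IsDensityMatrix ρ) :
    ρ ∉ F ↔
      ∃ (m : ℕ) (ι : Type) (_ : Fintype ι) (J : Set ℝ)
        (Φ : ℝ → (Matrix (Fin n) (Fin n) ℂ →ₗ[ℂ] Matrix (Fin m) (Fin m) ℂ))
        (M : ι → Matrix (Fin m) (Fin m) ℂ) (θ0 : ℝ) (c : ℝ),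
        IsEstimationTask J Φ M ∧ θ0 ∈ J ∧
        (∀ σ ∈ F, classicalFisher J Φ M σ θ0 ≤ c) ∧
        c < classicalFisher J Φ M ρ θ0 :=
  fisher_universally_identifies_states_general F hFcl hFconv hFdm ρ hρ

end
end

section
/- Let F be a nonempty closed convex set of density matrices on ℂ^n and let ρ be a density matrix with ρ ∉ F. Then there exists a positive semidefinite Hermitian matrix W such that Re Tr(Wσ) ≤ 1 for every σ ∈ F and Re Tr(Wρ) > 1. -/
/-! Separate `ρ` from `F` by a continuous linear functional (Hahn–Banach) and represent its real
part on Hermitian matrices as `X ↦ Re Tr(H X)` with `H` Hermitian. All matrices involved have trace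
one, so replacing `H` by `H + c • 1` shifts the functional by the constant `c` without spoiling the
separation. For `c` large, `H + c • 1` is positive semidefinite and the separating level `u + c`
is positive; dividing by it gives the witness. -/

open Matrix
open scoped Kronecker BigOperators ComplexOrder ENNReal EReal

noncomputable section

instance Matrix.locallyConvexSpace {m n E : Type*} [AddCommMonoid E] [Module ℝ E]
    [TopologicalSpace E] [LocallyConvexSpace ℝ E] : LocallyConvexSpace ℝ (Matrix m n E) :=
  Pi.locallyConvexSpace

namespace Matrix

variable {n : Type*} [Fintype n]

theorem exists_trace_mul_eq [DecidableEq n] {R : Type*} [CommSemiring R]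
    (φ : Matrix n n R →ₗ[R] R) : ∃ A : Matrix n n R, ∀ X, trace (A * X) = φ X := by
  refine ⟨of fun i j => φ (single j i 1), fun X => ?_⟩
  conv_rhs => rw [matrix_eq_sum_single X]
  simp only [trace, diag, mul_apply, of_apply, map_sum]
  rw [Finset.sum_comm]
  refine Finset.sum_congr rfl fun i _ => Finset.sum_congr rfl fun j _ => ?_
  have hsingle : single i j (X i j) = X i j • single i j 1 := by
    rw [smul_single, smul_eq_mul, mul_one]
  rw [hsingle, map_smul, smul_eq_mul, mul_comm]

variable {𝕜 : Type*} [RCLike 𝕜]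

theorem IsHermitian.re_trace_conjTranspose_mul {A X : Matrix n n 𝕜} (hX : X.IsHermitian) :
    RCLike.re (trace (Aᴴ * X)) = RCLike.re (trace (A * X)) := by
  rw [← hX.eq, ← conjTranspose_mul, trace_conjTranspose, hX.eq, trace_mul_comm,
    RCLike.star_def, RCLike.conj_re]

theorem exists_isHermitian_re_trace_mul_eq_s2 [DecidableEq n] (φ : Matrix n n 𝕜 →ₗ[𝕜] 𝕜) :
    ∃ H : Matrix n n 𝕜, H.IsHermitian ∧
      ∀ X, X.IsHermitian → RCLike.re (trace (H * X)) = RCLike.re (φ X) := by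
  obtain ⟨A, hA⟩ := exists_trace_mul_eq φ
  refine ⟨(2⁻¹ : ℝ) • (A + Aᴴ), (isHermitian_add_transpose_self A).smul (IsSelfAdjoint.all _),
    fun X hX => ?_⟩
  rw [smul_mul, trace_smul, add_mul, trace_add, RCLike.smul_re, map_add,
    hX.re_trace_conjTranspose_mul, hA]
  ring

theorem IsHermitian.eventually_posSemidef_add_smul_one [DecidableEq n] {H : Matrix n n 𝕜}
    (hH : H.IsHermitian) : ∀ᶠ c : ℝ in Filter.atTop, (H + c • (1 : Matrix n n 𝕜)).PosSemidef := by
  filter_upwards [Filter.eventually_all.2 fun i => Filter.eventually_ge_atTop (-hH.eigenvalues i)]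
    with c hc
  rw [posSemidef_iff_isHermitian_and_spectrum_nonneg, add_comm]
  refine ⟨(isHermitian_one.smul (IsSelfAdjoint.all c)).add hH, ?_⟩
  rw [RCLike.real_smul_eq_coe_smul (K := 𝕜), ← Algebra.algebraMap_eq_smul_one (A := Matrix n n 𝕜),
    ← spectrum.singleton_add_eq, hH.spectrum_eq_image_range]
  rintro _ ⟨_, rfl, _, ⟨_, ⟨i, rfl⟩, rfl⟩, rfl⟩
  change 0 ≤ (c : 𝕜) + hH.eigenvalues i
  rw [← RCLike.ofReal_add, RCLike.ofReal_nonneg]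
  linarith [hc i]

end Matrix

theorem psd_witness_exists_general {n : ℕ}
    (F : Set (Matrix (Fin n) (Fin n) ℂ)) (hFcl : IsClosed F)
    (hFconv : Convex ℝ F) (hFdm : ∀ σ ∈ F, IsDensityMatrix σ)
    (ρ : Matrix (Fin n) (Fin n) ℂ) (hρ : IsDensityMatrix ρ) (hρF : ρ ∉ F) :
    ∃ W : Matrix (Fin n) (Fin n) ℂ, W.PosSemidef ∧
      (∀ σ ∈ F, ((W * σ).trace).re ≤ 1) ∧ 1 < ((W * ρ).trace).re := by
  obtain ⟨φ, u, hφF, hφρ⟩ := RCLike.geometric_hahn_banach_closed_point (𝕜 := ℂ) hFconv hFcl hρF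
  obtain ⟨H, hH, hHφ⟩ := exists_isHermitian_re_trace_mul_eq_s2 (φ : Matrix (Fin n) (Fin n) ℂ →ₗ[ℂ] ℂ)
  simp only [RCLike.re_to_complex] at hφF hφρ hHφ
  obtain ⟨c, hcH, hcu⟩ :=
    (hH.eventually_posSemidef_add_smul_one.and (Filter.eventually_gt_atTop (-u))).exists
  have hshift : ∀ σ, IsDensityMatrix σ → ((H + c • 1) * σ).trace.re = (φ σ).re + c := by
    rintro σ ⟨hσ, htr⟩
    rw [add_mul, trace_add, smul_mul, one_mul, trace_smul, htr, Complex.add_re,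
      hHφ σ hσ.isHermitian]
    simp
  have hscale : ∀ σ, IsDensityMatrix σ →
      (((u + c)⁻¹ • (H + c • 1)) * σ).trace.re = ((φ σ).re + c) / (u + c) := by
    intro σ hσ
    rw [smul_mul, trace_smul, Complex.smul_re, hshift σ hσ, smul_eq_mul, inv_mul_eq_div]
  have hpos : 0 < u + c := by linarith
  refine ⟨(u + c)⁻¹ • (H + c • 1), hcH.smul (inv_nonneg.2 hpos.le), fun σ hσ => ?_, ?_⟩
  · rw [hscale σ (hFdm σ hσ), div_le_one hpos]
    linarith [hφF σ hσ]
  · rw [hscale ρ hρ, one_lt_div hpos]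
    linarith

/-- hyperplane separation with a positive semidefinite witness:
if `ρ ∉ F` then some PSD matrix `W` satisfies `Re Tr(Wσ) ≤ 1` on `F` and `Re Tr(Wρ) > 1`. -/
theorem psd_witness_exists {n : ℕ}
    (F : Set (Matrix (Fin n) (Fin n) ℂ)) (hFne : F.Nonempty) (hFcl : IsClosed F)
    (hFconv : Convex ℝ F) (hFdm : ∀ σ ∈ F, IsDensityMatrix σ)
    (ρ : Matrix (Fin n) (Fin n) ℂ) (hρ : IsDensityMatrix ρ) (hρF : ρ ∉ F) :
    ∃ W : Matrix (Fin n) (Fin n) ℂ, W.PosSemidef ∧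
      (∀ σ ∈ F, ((W * σ).trace).re ≤ 1) ∧ 1 < ((W * ρ).trace).re :=
  psd_witness_exists_general F hFcl hFconv hFdm ρ hρ hρF

end
end

section
/- Let G be an n×n Hermitian matrix with largest and smallest eigenvalues λ_max and λ_min, and let F be a nonempty closed convex set of density matrices on ℂ^n. Define s* := sup{ 2 Re Tr[ (G ⊗ I − I ⊗ G)² X ] : X an n²×n² positive semidefinite matrix on ℂ^n ⊗ ℂ^n such that both partial traces of X are equal, Tr_A X = Tr_B X = σ, for some σ ∈ F }. Then: (i) for every σ ∈ F, 4( Re Tr(G²σ) − (Re Tr(Gσ))² ) ≤ s*; and (ii) if (λ_max − λ_min)² > s*, then there exists a unit vector ψ ∈ ℂ^n with 4( ⟨ψ, G²ψ⟩ − ⟨ψ, Gψ⟩² ) > s*. -/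
open Matrix
open scoped Kronecker BigOperators ComplexOrder ENNReal EReal

noncomputable section

/-- Partial trace over the first tensor factor. -/
def ptraceA {n : ℕ} (X : Matrix (Fin n × Fin n) (Fin n × Fin n) ℂ) :
    Matrix (Fin n) (Fin n) ℂ :=
  Matrix.of fun i j => ∑ k : Fin n, X (k, i) (k, j)

/-- Partial trace over the second tensor factor. -/
def ptraceB {n : ℕ} (X : Matrix (Fin n × Fin n) (Fin n × Fin n) ℂ) :
    Matrix (Fin n) (Fin n) ℂ :=
  Matrix.of fun i j => ∑ k : Fin n, X (i, k) (j, k)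

/-!
The product state `σ ⊗ σ` has both partial traces equal to `σ`, and
`2 Tr[(G ⊗ I − I ⊗ G)² (σ ⊗ σ)] = 4 (Tr(G²σ) − Tr(Gσ)²)`, which gives (i); the supremum is over a
bounded set because every admissible `X` has unit trace. For (ii), the equal superposition of
unit eigenvectors for `λ_max` and `λ_min` has variance `(λ_max − λ_min)² / 4`.
-/

namespace Matrix

variable {n : Type*} [Fintype n]

theorem IsHermitian.im_trace_mul_eq_zero {A B : Matrix n n ℂ} (hA : A.IsHermitian)
    (hB : B.IsHermitian) : (A * B).trace.im = 0 := by
  rw [← Complex.conj_eq_iff_im, ← Complex.star_def, ← trace_conjTranspose, conjTranspose_mul,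
    hA.eq, hB.eq, trace_mul_comm]

variable [DecidableEq n]

theorem PosSemidef.re_trace_mul_le_of_eigenvalues_le {A X : Matrix n n ℂ} (hA : A.IsHermitian)
    (hX : X.PosSemidef) {c : ℝ} (hc : ∀ i, hA.eigenvalues i ≤ c) :
    (A * X).trace.re ≤ c * X.trace.re := by
  set U : Matrix n n ℂ := (hA.eigenvectorUnitary : Matrix n n ℂ)
  set Y := Uᴴ * X * U
  have hUU : U * Uᴴ = 1 := Unitary.coe_mul_star_self _
  have hAX : (A * X).trace = (diagonal (RCLike.ofReal ∘ hA.eigenvalues) * Y).trace := by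
    conv_lhs => rw [hA.spectral_theorem]
    simp only [Y, U, Unitary.conjStarAlgAut_apply, star_eq_conjTranspose, Matrix.mul_assoc]
    rw [trace_mul_comm]
    simp only [Matrix.mul_assoc]
  have hXY : X.trace = Y.trace := by
    rw [trace_mul_comm, ← Matrix.mul_assoc, hUU, Matrix.one_mul]
  rw [hAX, hXY, trace, trace, Complex.re_sum, Complex.re_sum, Finset.mul_sum]
  refine Finset.sum_le_sum fun i _ => ?_
  have hYi := (Complex.nonneg_iff.mp ((hX.conjTranspose_mul_mul_same U).diag_nonneg (i := i))).1
  simp only [diag_apply, diagonal_mul, Function.comp_apply, Complex.coe_algebraMap,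
    Complex.re_ofReal_mul]
  exact mul_le_mul_of_nonneg_right (hc i) hYi

theorem trace_sq_kronecker_sub_mul_kronecker_self {R : Type*} [CommRing R] (A σ : Matrix n n R) :
    (((A ⊗ₖ (1 : Matrix n n R) - (1 : Matrix n n R) ⊗ₖ A) ^ 2) * (σ ⊗ₖ σ)).trace =
      2 * (σ.trace * (A ^ 2 * σ).trace - (A * σ).trace ^ 2) := by
  simp only [sq, sub_mul, mul_sub, ← mul_kronecker_mul, trace_sub, trace_kronecker, one_mul,
    mul_one]
  ring

end Matrix

namespace Matrix.IsHermitian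

variable {𝕜 n : Type*} [RCLike 𝕜] [Fintype n] [DecidableEq n] {A : Matrix n n 𝕜}

theorem pow_mulVec_eigenvectorBasis (hA : A.IsHermitian) (k : ℕ) (j : n) :
    A ^ k *ᵥ ⇑(hA.eigenvectorBasis j) =
      ((hA.eigenvalues j : 𝕜) ^ k) • ⇑(hA.eigenvectorBasis j) := by
  induction k with
  | zero => simp
  | succ k ih =>
    rw [pow_succ', ← mulVec_mulVec, ih, mulVec_smul, hA.mulVec_eigenvectorBasis, pow_succ',
      RCLike.real_smul_eq_coe_smul (K := 𝕜), smul_smul, mul_comm]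

theorem star_eigenvectorBasis_dotProduct (hA : A.IsHermitian) (i j : n) :
    star ⇑(hA.eigenvectorBasis i) ⬝ᵥ ⇑(hA.eigenvectorBasis j) = if i = j then 1 else 0 := by
  rw [dotProduct_comm, ← EuclideanSpace.inner_eq_star_dotProduct,
    orthonormal_iff_ite.mp hA.eigenvectorBasis.orthonormal]

theorem exists_moments_eq_average_eigenvalue_pow (hA : A.IsHermitian) (p q : n) :
    ∃ ψ : n → 𝕜, ∀ k : ℕ,
      star ψ ⬝ᵥ (A ^ k *ᵥ ψ) = (((hA.eigenvalues p ^ k + hA.eigenvalues q ^ k) / 2 : ℝ) : 𝕜) := by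
  set u := ⇑(hA.eigenvectorBasis p)
  set v := ⇑(hA.eigenvectorBasis q)
  rcases eq_or_ne p q with rfl | hpq
  · refine ⟨u, fun k => ?_⟩
    rw [pow_mulVec_eigenvectorBasis, dotProduct_smul, star_eigenvectorBasis_dotProduct, if_pos rfl]
    push_cast
    ring
  · set s : 𝕜 := (((Real.sqrt 2)⁻¹ : ℝ) : 𝕜)
    have hss : star s * s = 2⁻¹ := by
      rw [RCLike.star_def, RCLike.conj_ofReal, ← RCLike.ofReal_mul, ← mul_inv,
        Real.mul_self_sqrt zero_le_two, RCLike.ofReal_inv, RCLike.ofReal_ofNat]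
    refine ⟨s • (u + v), fun k => ?_⟩
    simp only [mulVec_smul, mulVec_add, pow_mulVec_eigenvectorBasis, star_smul, star_add,
      smul_dotProduct, dotProduct_smul, add_dotProduct, dotProduct_add,
      star_eigenvectorBasis_dotProduct, u, v, if_pos, if_neg hpq, if_neg hpq.symm, smul_eq_mul]
    push_cast
    linear_combination ((hA.eigenvalues p : 𝕜) ^ k + (hA.eigenvalues q : 𝕜) ^ k) * hss

theorem exists_variance_eq_sq_sub_eigenvalues {G : Matrix n n ℂ} (hG : G.IsHermitian) (p q : n) :
    ∃ ψ : n → ℂ, star ψ ⬝ᵥ ψ = 1 ∧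
      4 * ((star ψ ⬝ᵥ ((G ^ 2) *ᵥ ψ)).re - ((star ψ ⬝ᵥ (G *ᵥ ψ)).re) ^ 2) =
        (hG.eigenvalues p - hG.eigenvalues q) ^ 2 := by
  obtain ⟨ψ, hψ⟩ := hG.exists_moments_eq_average_eigenvalue_pow p q
  refine ⟨ψ, by simpa using hψ 0, ?_⟩
  have hψ1 := hψ 1
  rw [pow_one] at hψ1
  simp only [hψ1, hψ 2, Complex.coe_algebraMap, Complex.ofReal_re]
  ring

end Matrix.IsHermitian

section Coupling

variable {n : ℕ}

theorem ptraceA_kronecker (A B : Matrix (Fin n) (Fin n) ℂ) : ptraceA (A ⊗ₖ B) = A.trace • B := by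
  ext i j
  simp [ptraceA, trace, Finset.sum_mul]

theorem ptraceB_kronecker (A B : Matrix (Fin n) (Fin n) ℂ) : ptraceB (A ⊗ₖ B) = B.trace • A := by
  ext i j
  simp [ptraceB, trace, Finset.mul_sum, mul_comm]

theorem trace_ptraceA (X : Matrix (Fin n × Fin n) (Fin n × Fin n) ℂ) :
    (ptraceA X).trace = X.trace := by
  simp only [trace, diag, ptraceA, of_apply, Fintype.sum_prod_type]
  exact Finset.sum_comm

/-- The set whose supremum is the paper's `s*`. -/
def couplingValues (G : Matrix (Fin n) (Fin n) ℂ) (F : Set (Matrix (Fin n) (Fin n) ℂ)) :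
    Set ℝ :=
  { x : ℝ |
    ∃ X : Matrix (Fin n × Fin n) (Fin n × Fin n) ℂ, X.PosSemidef ∧
      (∃ σ' ∈ F, ptraceA X = σ' ∧ ptraceB X = σ') ∧
      x = 2 * ((((G ⊗ₖ (1 : Matrix (Fin n) (Fin n) ℂ) -
            (1 : Matrix (Fin n) (Fin n) ℂ) ⊗ₖ G) ^ 2) * X).trace).re }

variable {G : Matrix (Fin n) (Fin n) ℂ} {F : Set (Matrix (Fin n) (Fin n) ℂ)}

theorem variance_mem_couplingValues (hG : G.IsHermitian) {σ : Matrix (Fin n) (Fin n) ℂ}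
    (hσF : σ ∈ F) (hσ : IsDensityMatrix σ) :
    4 * (((G ^ 2 * σ).trace).re - (((G * σ).trace).re) ^ 2) ∈ couplingValues G F := by
  obtain ⟨hσpsd, hσtr⟩ := hσ
  refine ⟨σ ⊗ₖ σ, hσpsd.kronecker hσpsd, ⟨σ, hσF, ?_, ?_⟩, ?_⟩
  · rw [ptraceA_kronecker, hσtr, one_smul]
  · rw [ptraceB_kronecker, hσtr, one_smul]
  · rw [trace_sq_kronecker_sub_mul_kronecker_self, hσtr, one_mul]
    have him := hG.im_trace_mul_eq_zero hσpsd.isHermitian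
    simp only [sq, Complex.mul_re, Complex.sub_re, Complex.re_ofNat, Complex.im_ofNat, him]
    ring

theorem bddAbove_couplingValues (hG : G.IsHermitian) (hF : ∀ σ ∈ F, IsDensityMatrix σ) :
    BddAbove (couplingValues G F) := by
  set D := G ⊗ₖ (1 : Matrix (Fin n) (Fin n) ℂ) - (1 : Matrix (Fin n) (Fin n) ℂ) ⊗ₖ G
  have hD : D.IsHermitian := by
    simp only [D, IsHermitian, conjTranspose_sub, conjTranspose_kronecker, conjTranspose_one,
      hG.eq]
  obtain ⟨c, hc⟩ := (Set.finite_range (hD.pow 2).eigenvalues).bddAbove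
  refine ⟨2 * c, ?_⟩
  rintro x ⟨X, hX, ⟨σ, hσF, hσ, -⟩, rfl⟩
  have hXtr : X.trace = 1 := by rw [← trace_ptraceA, hσ, (hF σ hσF).2]
  have hbound := hX.re_trace_mul_le_of_eigenvalues_le (hD.pow 2) fun i => hc ⟨i, rfl⟩
  rw [hXtr, Complex.one_re, mul_one] at hbound
  linarith

end Coupling

theorem unitary_encoding_criterion_general {n : ℕ}
    (G : Matrix (Fin n) (Fin n) ℂ) (hG : G.IsHermitian)
    (lmax lmin : ℝ)
    (hmax : IsGreatest (Set.range hG.eigenvalues) lmax)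
    (hmin : IsLeast (Set.range hG.eigenvalues) lmin)
    (F : Set (Matrix (Fin n) (Fin n) ℂ)) (hFdm : ∀ σ ∈ F, IsDensityMatrix σ) :
    (∀ σ ∈ F,
        4 * (((G ^ 2 * σ).trace).re - (((G * σ).trace).re) ^ 2) ≤
          sSup { x : ℝ |
            ∃ X : Matrix (Fin n × Fin n) (Fin n × Fin n) ℂ, X.PosSemidef ∧
              (∃ σ' ∈ F, ptraceA X = σ' ∧ ptraceB X = σ') ∧
              x = 2 * ((((G ⊗ₖ (1 : Matrix (Fin n) (Fin n) ℂ) -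
                    (1 : Matrix (Fin n) (Fin n) ℂ) ⊗ₖ G) ^ 2) * X).trace).re }) ∧
      ((lmax - lmin) ^ 2 >
          sSup { x : ℝ |
            ∃ X : Matrix (Fin n × Fin n) (Fin n × Fin n) ℂ, X.PosSemidef ∧
              (∃ σ' ∈ F, ptraceA X = σ' ∧ ptraceB X = σ') ∧
              x = 2 * ((((G ⊗ₖ (1 : Matrix (Fin n) (Fin n) ℂ) -
                    (1 : Matrix (Fin n) (Fin n) ℂ) ⊗ₖ G) ^ 2) * X).trace).re } →
        ∃ ψ : Fin n → ℂ, star ψ ⬝ᵥ ψ = 1 ∧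
          sSup { x : ℝ |
            ∃ X : Matrix (Fin n × Fin n) (Fin n × Fin n) ℂ, X.PosSemidef ∧
              (∃ σ' ∈ F, ptraceA X = σ' ∧ ptraceB X = σ') ∧
              x = 2 * ((((G ⊗ₖ (1 : Matrix (Fin n) (Fin n) ℂ) -
                    (1 : Matrix (Fin n) (Fin n) ℂ) ⊗ₖ G) ^ 2) * X).trace).re } <
            4 * ((star ψ ⬝ᵥ ((G ^ 2) *ᵥ ψ)).re - ((star ψ ⬝ᵥ (G *ᵥ ψ)).re) ^ 2)) := by
  refine ⟨fun σ hσ => le_csSup (bddAbove_couplingValues hG hFdm)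
    (variance_mem_couplingValues hG hσ (hFdm σ hσ)), fun hgt => ?_⟩
  obtain ⟨p, rfl⟩ := hmax.1
  obtain ⟨q, rfl⟩ := hmin.1
  obtain ⟨ψ, hψ, hvar⟩ := hG.exists_variance_eq_sq_sub_eigenvalues p q
  exact ⟨ψ, hψ, hvar ▸ hgt⟩

/-- Theorem 4 of the paper: with
`s* = sup { 2 Re Tr[(G⊗I − I⊗G)² X] | X ⪰ 0, Tr_A X = Tr_B X = σ ∈ F }`,
(i) every free state has quantum Fisher information (bounded by 4·variance) at most `s*`;
(ii) if `(λmax − λmin)² > s*` then some pure state beats `s*`. -/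
theorem unitary_encoding_criterion {n : ℕ}
    (G : Matrix (Fin n) (Fin n) ℂ) (hG : G.IsHermitian)
    (lmax lmin : ℝ)
    (hmax : IsGreatest (Set.range hG.eigenvalues) lmax)
    (hmin : IsLeast (Set.range hG.eigenvalues) lmin)
    (F : Set (Matrix (Fin n) (Fin n) ℂ)) (hFne : F.Nonempty) (hFcl : IsClosed F)
    (hFconv : Convex ℝ F) (hFdm : ∀ σ ∈ F, IsDensityMatrix σ) :
    (∀ σ ∈ F,
        4 * (((G ^ 2 * σ).trace).re - (((G * σ).trace).re) ^ 2) ≤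
          sSup { x : ℝ |
            ∃ X : Matrix (Fin n × Fin n) (Fin n × Fin n) ℂ, X.PosSemidef ∧
              (∃ σ' ∈ F, ptraceA X = σ' ∧ ptraceB X = σ') ∧
              x = 2 * ((((G ⊗ₖ (1 : Matrix (Fin n) (Fin n) ℂ) -
                    (1 : Matrix (Fin n) (Fin n) ℂ) ⊗ₖ G) ^ 2) * X).trace).re }) ∧
      ((lmax - lmin) ^ 2 >
          sSup { x : ℝ |
            ∃ X : Matrix (Fin n × Fin n) (Fin n × Fin n) ℂ, X.PosSemidef ∧
              (∃ σ' ∈ F, ptraceA X = σ' ∧ ptraceB X = σ') ∧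
              x = 2 * ((((G ⊗ₖ (1 : Matrix (Fin n) (Fin n) ℂ) -
                    (1 : Matrix (Fin n) (Fin n) ℂ) ⊗ₖ G) ^ 2) * X).trace).re } →
        ∃ ψ : Fin n → ℂ, star ψ ⬝ᵥ ψ = 1 ∧
          sSup { x : ℝ |
            ∃ X : Matrix (Fin n × Fin n) (Fin n × Fin n) ℂ, X.PosSemidef ∧
              (∃ σ' ∈ F, ptraceA X = σ' ∧ ptraceB X = σ') ∧
              x = 2 * ((((G ⊗ₖ (1 : Matrix (Fin n) (Fin n) ℂ) -
                    (1 : Matrix (Fin n) (Fin n) ℂ) ⊗ₖ G) ^ 2) * X).trace).re } <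
            4 * ((star ψ ⬝ᵥ ((G ^ 2) *ᵥ ψ)).re - ((star ψ ⬝ᵥ (G *ᵥ ψ)).re) ^ 2)) :=
  unitary_encoding_criterion_general G hG lmax lmin hmax hmin F hFdm

end
end

section
/- Let G be an n×n Hermitian matrix with largest eigenvalue λ_max and smallest eigenvalue λ_min. Then sup over unit vectors ψ ∈ ℂ^n of 4( ⟨ψ, G²ψ⟩ − ⟨ψ, Gψ⟩² ) equals (λ_max − λ_min)², and the supremum is attained at ψ = (u + v)/√2 where u and v are orthonormal eigenvectors of G for λ_max and λ_min respectively. -/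
/-!
In an orthonormal eigenbasis `eᵢ` of `G`, the expectations `⟨ψ, Gᵏ ψ⟩` are the moments
`∑ pᵢ λᵢᵏ` of the eigenvalues under the probability weights `pᵢ = |⟨eᵢ, ψ⟩|²`. The bound is
therefore Popoviciu's inequality: for values in `[a, b]` with mean `m`, averaging
`(b - x)(x - a) ≥ 0` gives `Var ≤ (b - m)(m - a) = ((b - a)/2)² - (m - (a + b)/2)²`.
For `ψ = (u + v)/√2` the two extremal eigenvalues each carry weight `1/2`, which attains it.
-/

open Matrix
open scoped Kronecker BigOperators ComplexOrder ENNReal EReal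

noncomputable section

theorem Finset.four_mul_weighted_variance_le {ι : Type*} (s : Finset ι) (p x : ι → ℝ) {a b : ℝ}
    (hp : ∀ i ∈ s, 0 ≤ p i) (hp1 : ∑ i ∈ s, p i = 1) (hx : ∀ i ∈ s, x i ∈ Set.Icc a b) :
    4 * (∑ i ∈ s, p i * x i ^ 2 - (∑ i ∈ s, p i * x i) ^ 2) ≤ (b - a) ^ 2 := by
  set m := ∑ i ∈ s, p i * x i
  have hsq : ∑ i ∈ s, p i * x i ^ 2 ≤ (a + b) * m - a * b :=
    calc ∑ i ∈ s, p i * x i ^ 2 ≤ ∑ i ∈ s, p i * ((a + b) * x i - a * b) := by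
          refine Finset.sum_le_sum fun i hi => mul_le_mul_of_nonneg_left ?_ (hp i hi)
          nlinarith [(hx i hi).1, (hx i hi).2]
      _ = ∑ i ∈ s, ((a + b) * (p i * x i) - a * b * p i) := by
          refine Finset.sum_congr rfl fun i _ => ?_
          ring
      _ = (a + b) * m - a * b := by
          rw [Finset.sum_sub_distrib, ← Finset.mul_sum, ← Finset.mul_sum, hp1, mul_one]
  nlinarith [sq_nonneg (2 * m - a - b)]

theorem Matrix.pow_mulVec_of_mulVec_eq_smul {ι R : Type*} [Fintype ι] [DecidableEq ι]
    [CommSemiring R] {A : Matrix ι ι R} {c : R} {u : ι → R} (hu : A *ᵥ u = c • u) (k : ℕ) :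
    A ^ k *ᵥ u = c ^ k • u := by
  induction k with
  | zero => simp
  | succ k ih => rw [pow_succ', ← mulVec_mulVec, ih, mulVec_smul, hu, smul_smul, pow_succ]

theorem star_dotProduct_mulVec_inv_sqrt_two_smul_add {ι : Type*} [Fintype ι]
    {A : Matrix ι ι ℂ} {α β : ℂ} {u v : ι → ℂ} (hu : A *ᵥ u = α • u) (hv : A *ᵥ v = β • v)
    (hun : star u ⬝ᵥ u = 1) (hvn : star v ⬝ᵥ v = 1) (huv : star u ⬝ᵥ v = 0) :
    star ((Real.sqrt 2 : ℂ)⁻¹ • (u + v)) ⬝ᵥ (A *ᵥ ((Real.sqrt 2 : ℂ)⁻¹ • (u + v))) =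
      (α + β) / 2 := by
  have hvu : star v ⬝ᵥ u = 0 := by rw [star_dotProduct, huv, star_zero]
  have hsqrt : star (Real.sqrt 2 : ℂ)⁻¹ * (Real.sqrt 2 : ℂ)⁻¹ = 1 / 2 := by
    rw [star_inv₀, Complex.star_def, Complex.conj_ofReal, ← mul_inv, ← Complex.ofReal_mul,
      Real.mul_self_sqrt zero_le_two]
    norm_num
  rw [mulVec_smul, mulVec_add, hu, hv, star_smul, star_add]
  simp only [smul_dotProduct, dotProduct_smul, add_dotProduct, dotProduct_add, smul_eq_mul,
    hun, hvn, huv, hvu]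
  linear_combination (α + β) * hsqrt

theorem Matrix.IsHermitian.star_dotProduct_pow_mulVec {ι : Type*} [Fintype ι] [DecidableEq ι]
    {A : Matrix ι ι ℂ} (hA : A.IsHermitian) (ψ : ι → ℂ) (k : ℕ) :
    star ψ ⬝ᵥ (A ^ k *ᵥ ψ) = ((∑ i, ‖(star (hA.eigenvectorUnitary : Matrix ι ι ℂ) *ᵥ ψ) i‖ ^ 2 *
      hA.eigenvalues i ^ k : ℝ) : ℂ) := by
  set U : Matrix ι ι ℂ := ↑hA.eigenvectorUnitary
  have hpow : A ^ k = U * diagonal (fun i => (hA.eigenvalues i : ℂ) ^ k) * star U := by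
    conv_lhs => rw [hA.spectral_theorem, ← map_pow, diagonal_pow]
    rfl
  have hψU : star ψ ᵥ* U = star (star U *ᵥ ψ) := by
    rw [star_mulVec, ← star_eq_conjTranspose, star_star]
  rw [hpow, ← mulVec_mulVec, ← mulVec_mulVec, dotProduct_mulVec, hψU]
  push_cast
  simp only [dotProduct, mulVec_diagonal, Pi.star_apply]
  refine Finset.sum_congr rfl fun i _ => ?_
  rw [Complex.star_def, ← Complex.conj_mul']
  ring

theorem Matrix.IsHermitian.four_mul_variance_le {ι : Type*} [Fintype ι] [DecidableEq ι]
    {A : Matrix ι ι ℂ} (hA : A.IsHermitian) {a b : ℝ} (hab : ∀ i, hA.eigenvalues i ∈ Set.Icc a b)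
    {ψ : ι → ℂ} (hψ : star ψ ⬝ᵥ ψ = 1) :
    4 * ((star ψ ⬝ᵥ (A ^ 2 *ᵥ ψ)).re - (star ψ ⬝ᵥ (A *ᵥ ψ)).re ^ 2) ≤ (b - a) ^ 2 := by
  have hnorm := hA.star_dotProduct_pow_mulVec ψ 0
  have hmean := hA.star_dotProduct_pow_mulVec ψ 1
  simp only [pow_zero, one_mulVec, mul_one, hψ] at hnorm
  simp only [pow_one] at hmean
  rw [hA.star_dotProduct_pow_mulVec, hmean, Complex.ofReal_re, Complex.ofReal_re]
  exact Finset.four_mul_weighted_variance_le _ _ _ (fun i _ => sq_nonneg _)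
    (Complex.ofReal_injective hnorm).symm (fun i _ => hab i)

/-- the maximum of four times the variance `4(⟨ψ,G²ψ⟩ − ⟨ψ,Gψ⟩²)` over
unit vectors `ψ` equals `(λmax − λmin)²`, attained at `ψ = (u + v)/√2` for orthonormal
eigenvectors `u, v` of the extremal eigenvalues. -/
theorem max_variance_eq_spectral_gap_sq {n : ℕ}
    (G : Matrix (Fin n) (Fin n) ℂ) (hG : G.IsHermitian)
    (lmax lmin : ℝ)
    (hmax : IsGreatest (Set.range hG.eigenvalues) lmax)
    (hmin : IsLeast (Set.range hG.eigenvalues) lmin)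
    (u v : Fin n → ℂ)
    (hu : G *ᵥ u = (lmax : ℂ) • u) (hv : G *ᵥ v = (lmin : ℂ) • v)
    (hun : star u ⬝ᵥ u = 1) (hvn : star v ⬝ᵥ v = 1) (huv : star u ⬝ᵥ v = 0) :
    IsGreatest
      { x : ℝ | ∃ ψ : Fin n → ℂ, star ψ ⬝ᵥ ψ = 1 ∧
          x = 4 * ((star ψ ⬝ᵥ ((G ^ 2) *ᵥ ψ)).re - ((star ψ ⬝ᵥ (G *ᵥ ψ)).re) ^ 2) }
      ((lmax - lmin) ^ 2) ∧
    (4 * ((star (((Real.sqrt 2 : ℂ))⁻¹ • (u + v)) ⬝ᵥ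
            ((G ^ 2) *ᵥ (((Real.sqrt 2 : ℂ))⁻¹ • (u + v)))).re -
          ((star (((Real.sqrt 2 : ℂ))⁻¹ • (u + v)) ⬝ᵥ
            (G *ᵥ (((Real.sqrt 2 : ℂ))⁻¹ • (u + v)))).re) ^ 2) =
        (lmax - lmin) ^ 2) := by
  set w : Fin n → ℂ := (Real.sqrt 2 : ℂ)⁻¹ • (u + v)
  have hunit : star w ⬝ᵥ w = 1 := by
    have h := star_dotProduct_mulVec_inv_sqrt_two_smul_add (A := 1) (α := 1) (β := 1)
      (by simp) (by simp) hun hvn huv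
    rwa [one_mulVec, one_add_one_eq_two, div_self two_ne_zero] at h
  have hval : 4 * ((star w ⬝ᵥ (G ^ 2 *ᵥ w)).re - (star w ⬝ᵥ (G *ᵥ w)).re ^ 2) =
      (lmax - lmin) ^ 2 := by
    rw [star_dotProduct_mulVec_inv_sqrt_two_smul_add hu hv hun hvn huv,
      star_dotProduct_mulVec_inv_sqrt_two_smul_add (pow_mulVec_of_mulVec_eq_smul hu 2)
        (pow_mulVec_of_mulVec_eq_smul hv 2) hun hvn huv]
    norm_cast
    ring
  refine ⟨⟨⟨w, hunit, hval.symm⟩, ?_⟩, hval⟩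
  rintro x ⟨ψ, hψ, rfl⟩
  exact hG.four_mul_variance_le (fun i => ⟨hmin.2 ⟨i, rfl⟩, hmax.2 ⟨i, rfl⟩⟩) hψ

end
end
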